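/- Let Σ be a positive definite symmetric real matrix indexed by a finite set V, let i, j ∈ V be distinct, and let Z ⊆ V ∖ {i,j}. Then ((Σ_{ijZ,ijZ})⁻¹)_{i,j} = 0 if and only if det(Σ_{iZ,jZ}) = 0, where ijZ denotes {i,j} ∪ Z. -/

import Mathlib

open Matrix

lemma posDef_submatrix_of_injective' {m n : Type*} [Fintype m] [Fintype n]
    {S : Matrix n n ℝ} (hS : S.PosDef) {f : m → n} (hf : Function.Injective f) :
    (S.submatrix f f).PosDef := by
  classical
  refine Matrix.posDef_iff_dotProduct_mulVec.mpr ⟨hS.1.submatrix f, fun x hx => ?_⟩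
  set y : n → ℝ := fun v => if h : ∃ a, f a = v then x h.choose else 0 with hy
  have hyf : ∀ a, y (f a) = x a := by
    intro a
    have h : ∃ b, f b = f a := ⟨a, rfl⟩
    simp only [hy, dif_pos h]
    exact congrArg x (hf h.choose_spec)
  have hy0 : ∀ v, (¬ ∃ a, f a = v) → y v = 0 := fun v h => by simp [hy, h]
  have hyne : y ≠ 0 := by
    intro h0
    apply hx
    funext a
    have := congrFun h0 (f a)
    simpa [hyf a] using this
  have hsum : ∀ w : n → ℝ, ∑ v, w v * y v = ∑ a, w (f a) * x a := by
    intro w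
    have h1 : ∑ v ∈ Finset.univ.image f, w v * y v = ∑ v, w v * y v := by
      refine Finset.sum_subset (Finset.subset_univ _) (fun v _ hv => ?_)
      rw [hy0 v, mul_zero]
      simpa [Finset.mem_image] using hv
    rw [← h1, Finset.sum_image (fun a _ b _ h => hf h)]
    simp [hyf]
  have key : star y ⬝ᵥ S.mulVec y = star x ⬝ᵥ (S.submatrix f f).mulVec x := by
    simp only [star_trivial, dotProduct, mulVec, dotProduct]
    have h2 : ∀ v, (∑ w, S v w * y w) = ∑ b, S v (f b) * x b := fun v => hsum (S v)
    calc ∑ v, y v * ∑ w, S v w * y w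
        = ∑ v, (∑ w, S v w * y w) * y v := by simp [mul_comm]
      _ = ∑ a, (∑ w, S (f a) w * y w) * x a := hsum _
      _ = ∑ a, x a * ∑ b, (S.submatrix f f) a b * x b := by
          refine Finset.sum_congr rfl fun a _ => ?_
          rw [h2, mul_comm]
          rfl
  rw [← key]
  exact hS.dotProduct_mulVec_pos hyne

/-- For a positive definite symmetric real matrix `Σ` indexed by `V`, distinct
`i j ∈ V` and `Z ⊆ V \ {i,j}`, the `(i,j)` entry of `(Σ_{ijZ,ijZ})⁻¹` vanishes
iff `det (Σ_{iZ,jZ}) = 0`. Here the square matrix `Σ_{iZ,jZ}` is realized with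
rows indexed by `{i} ∪ Z` and the column index `i` replaced by `j`. -/
theorem inv_entry_zero_iff_det_zero {V : Type*} [Fintype V] [DecidableEq V]
    (S : Matrix V V ℝ) (hsymm : S.IsSymm) (hS : S.PosDef)
    (i j : V) (hij : i ≠ j) (Z : Finset V) (hiZ : i ∉ Z) (hjZ : j ∉ Z) :
    ((S.submatrix (fun x : ↥(insert i (insert j Z)) => (x : V))
          (fun x : ↥(insert i (insert j Z)) => (x : V)))⁻¹)
        ⟨i, Finset.mem_insert_self i _⟩
        ⟨j, Finset.mem_insert_of_mem (Finset.mem_insert_self j Z)⟩ = 0 ↔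
      (S.submatrix (fun x : ↥(insert i Z) => (x : V))
          (fun x : ↥(insert i Z) => if (x : V) = i then j else (x : V))).det = 0 := by
  classical
  have hjiZ : j ∉ insert i Z := by simp [Ne.symm hij, hjZ]
  have hijZ : i ∉ insert j Z := by simp [hij, hiZ]
  have hins : insert i (insert j Z) = insert j (insert i Z) := Finset.insert_comm i j Z
  set M : Matrix _ _ ℝ := S.submatrix (fun x : ↥(insert i (insert j Z)) => (x : V))
      (fun x : ↥(insert i (insert j Z)) => (x : V)) with hMdef
  set B : Matrix _ _ ℝ := S.submatrix (fun x : ↥(insert i Z) => (x : V))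
      (fun x : ↥(insert i Z) => if (x : V) = i then j else (x : V)) with hBdef
  set iI : ↥(insert i (insert j Z)) := ⟨i, Finset.mem_insert_self i _⟩ with hiI
  set jI : ↥(insert i (insert j Z)) :=
    ⟨j, Finset.mem_insert_of_mem (Finset.mem_insert_self j Z)⟩ with hjI
  have hM : M.PosDef := posDef_submatrix_of_injective' hS Subtype.coe_injective
  have hdet : M.det ≠ 0 := ne_of_gt hM.det_pos
  have h1 : M⁻¹ iI jI = (M.det)⁻¹ * M.adjugate iI jI := by
    rw [Matrix.inv_def, Matrix.smul_apply, Ring.inverse_eq_inv, smul_eq_mul]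
  set N := M.updateRow jI (Pi.single iI 1) with hNdef
  have hadj : M.adjugate iI jI = N.det := Matrix.adjugate_apply M iI jI
  -- equivalences
  let e1 : ↥(insert j (insert i Z)) ≃ ↥(insert i (insert j Z)) :=
    Equiv.subtypeEquivRight (fun x => by rw [hins])
  let e2 := Finset.subtypeInsertEquivOption hjiZ
  let er : Option ↥(insert i Z) ≃ ↥(insert i (insert j Z)) := e2.symm.trans e1
  let e3 := Finset.subtypeInsertEquivOption hijZ
  let s : ↥(insert i Z) ≃ ↥(insert j Z) :=
    { toFun := fun x => ⟨if (x : V) = i then j else x, by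
        rcases Finset.mem_insert.mp x.2 with h | h
        · simp [h]
        · have hxi : (x : V) ≠ i := fun hx => hiZ (hx ▸ h)
          simp [hxi, Finset.mem_insert_of_mem h]⟩
      invFun := fun y => ⟨if (y : V) = j then i else y, by
        rcases Finset.mem_insert.mp y.2 with h | h
        · simp [h]
        · have hyj : (y : V) ≠ j := fun hy => hjZ (hy ▸ h)
          simp [hyj, Finset.mem_insert_of_mem h]⟩
      left_inv := fun x => by
        rcases Finset.mem_insert.mp x.2 with h | h
        · apply Subtype.ext; simp [h]
        · have hxi : (x : V) ≠ i := fun hx => hiZ (hx ▸ h)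
          have hxj : (x : V) ≠ j := fun hx => hjZ (hx ▸ h)
          apply Subtype.ext; simp [hxi, hxj]
      right_inv := fun y => by
        rcases Finset.mem_insert.mp y.2 with h | h
        · apply Subtype.ext; simp [h]
        · have hyj : (y : V) ≠ j := fun hy => hjZ (hy ▸ h)
          have hyi : (y : V) ≠ i := fun hy => hiZ (hy ▸ h)
          apply Subtype.ext; simp [hyj, hyi] }
  let ec : Option ↥(insert i Z) ≃ ↥(insert i (insert j Z)) := (Equiv.optionCongr s).trans e3.symm
  have her_some : ∀ a : ↥(insert i Z), (er (some a) : V) = a := fun a => rfl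
  have her_none : er none = jI := by apply Subtype.ext; rfl
  have hec_none : ec none = iI := by apply Subtype.ext; rfl
  have hec_some : ∀ b : ↥(insert i Z), (ec (some b) : V) = if (b : V) = i then j else b :=
    fun b => rfl
  -- permutation step
  let σ : Equiv.Perm (Option ↥(insert i Z)) := ec.trans er.symm
  have hsub : N.submatrix er ec = (N.submatrix er er).submatrix id σ := by
    ext a b
    simp [σ, Matrix.submatrix_apply]
  have hdet2 : (N.submatrix er ec).det = ((Equiv.Perm.sign σ : ℤ) : ℝ) * N.det := by
    rw [hsub, Matrix.det_permute', Matrix.det_submatrix_equiv_self]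
  have hsign : ((Equiv.Perm.sign σ : ℤ) : ℝ) ≠ 0 := by
    rcases Int.units_eq_one_or (Equiv.Perm.sign σ) with h | h <;> simp [h]
  -- block step
  let c : Matrix ↥(insert i Z) PUnit.{1} ℝ := Matrix.of fun a _ => S a i
  have hblock : N.submatrix er ec =
      (Matrix.fromBlocks B c 0 (1 : Matrix PUnit.{1} PUnit.{1} ℝ)).submatrix
        (Equiv.optionEquivSumPUnit _) (Equiv.optionEquivSumPUnit _) := by
    ext a b
    match a, b with
    | some a, some b =>
        have hne : er (some a) ≠ jI := by
          intro h
          have hv : (a : V) = j := congrArg Subtype.val h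
          exact hjiZ (hv ▸ a.2)
        show N (er (some a)) (ec (some b)) = _
        rw [hNdef, Matrix.updateRow_ne hne]
        simp [Matrix.submatrix_apply, Equiv.optionEquivSumPUnit, hMdef, hBdef, her_some a,
          hec_some b]
    | some a, none =>
        have hne : er (some a) ≠ jI := by
          intro h
          have hv : (a : V) = j := congrArg Subtype.val h
          exact hjiZ (hv ▸ a.2)
        show N (er (some a)) (ec none) = _
        rw [hNdef, Matrix.updateRow_ne hne, hec_none]
        simp [Matrix.submatrix_apply, Equiv.optionEquivSumPUnit, hMdef, her_some a, hiI, c]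
    | none, some b =>
        have hne : ec (some b) ≠ iI := by
          intro h
          have hv : (if (b : V) = i then j else (b : V)) = i := congrArg Subtype.val h
          by_cases hb : (b : V) = i
          · rw [if_pos hb] at hv; exact hij hv.symm
          · rw [if_neg hb] at hv; exact hb hv
        show N (er none) (ec (some b)) = _
        rw [her_none, hNdef, Matrix.updateRow_self, Pi.single_eq_of_ne hne]
        simp [Matrix.submatrix_apply, Equiv.optionEquivSumPUnit]
    | none, none =>
        show N (er none) (ec none) = _
        rw [her_none, hec_none, hNdef, Matrix.updateRow_self, Pi.single_eq_same]
        simp [Equiv.optionEquivSumPUnit, Matrix.one_apply]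
  have hdet3 : (N.submatrix er ec).det = B.det := by
    rw [hblock, Matrix.det_submatrix_equiv_self, Matrix.det_fromBlocks_zero₂₁, Matrix.det_one,
      mul_one]
  have hN0 : N.det = 0 ↔ B.det = 0 := by
    rw [← hdet3, hdet2, mul_eq_zero]
    simp [hsign]
  rw [h1, hadj, mul_eq_zero]
  simp only [inv_eq_zero, hdet, false_or]
  exact hN0
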